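/- Let p be an odd prime and α a primitive Dirichlet character modulo p³. Then there exists a nonzero residue a_α modulo p such that for all positive integers l and all integers n coprime to p, α(n + p²l)·conj(α(n)) = e^{2πi a_α l n̄ / p}, where n̄ denotes the inverse of n modulo p. -/

import Mathlib

/-!
Put `u = 1 + p²` in `ZMod (p³)`. Since `(p²)² = 0` there, `u ^ t = 1 + t p²`, so `u` has order `p`
and the powers of `u` exhaust the kernel of reduction mod `p²`. Hence `α u` is a `p`-th root of
unity `e_p(a)`, and `a ≠ 0` because otherwise `α` would factor through `p²`. For `n` prime to `p`
and `m ≡ l n̄ (mod p)` one has `n + p² l = n u ^ m`, so `α(n + p² l) conj(α n) = α(u) ^ m = e_p(a l n̄)`.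
-/

open ZMod

lemma one_add_pow_of_sq_eq_zero {R : Type*} [CommRing R] {x : R} (hx : x ^ 2 = 0) (t : ℕ) :
    (1 + x) ^ t = 1 + t * x := by
  induction t with
  | zero => simp
  | succ t ih =>
    rw [pow_succ, ih]
    push_cast
    linear_combination (t : R) * hx

namespace ZMod

variable {q : ℕ}

lemma exists_toCircle_eq_of_pow_eq_one {N : ℕ} [NeZero N] {z : ℂ} (hz : z ^ N = 1) :
    ∃ a : ZMod N, (toCircle a : ℂ) = z := by
  obtain ⟨i, -, rfl⟩ := (Complex.isPrimitiveRoot_exp N (NeZero.ne N)).eq_pow_of_pow_eq_one hz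
  refine ⟨i, ?_⟩
  rw [toCircle_natCast, ← Complex.exp_nat_mul]
  congr 1
  ring

lemma natCast_self_pow_three : (q : ZMod (q ^ 3)) ^ 3 = 0 := by
  rw [← Nat.cast_pow, natCast_self]

lemma one_add_natCast_sq_pow (t : ℕ) :
    (1 + (q : ZMod (q ^ 3)) ^ 2) ^ t = 1 + t * (q : ZMod (q ^ 3)) ^ 2 :=
  one_add_pow_of_sq_eq_zero (by linear_combination (q : ZMod (q ^ 3)) * natCast_self_pow_three) t

lemma one_add_natCast_sq_pow_self : (1 + (q : ZMod (q ^ 3)) ^ 2) ^ q = 1 := by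
  rw [one_add_natCast_sq_pow]
  linear_combination (natCast_self_pow_three : (q : ZMod (q ^ 3)) ^ 3 = 0)

lemma exists_eq_one_add_natCast_sq_pow_of_castHom_eq_one [NeZero q] {v : ZMod (q ^ 3)}
    (hv : (v.cast : ZMod (q ^ 2)) = 1) :
    ∃ t : ℕ, v = (1 + (q : ZMod (q ^ 3)) ^ 2) ^ t := by
  have hval : (((v - 1).val : ℕ) : ZMod (q ^ 2)) = 0 := by
    rw [← map_natCast (castHom (pow_dvd_pow q (by norm_num : 2 ≤ 3)) (ZMod (q ^ 2))),
      natCast_zmod_val, map_sub, castHom_apply, hv, map_one, sub_self]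
  obtain ⟨t, ht⟩ := (natCast_eq_zero_iff _ _).mp hval
  refine ⟨t, ?_⟩
  have hv1 := natCast_zmod_val (v - 1)
  rw [ht] at hv1
  push_cast at hv1
  rw [one_add_natCast_sq_pow]
  linear_combination -hv1

lemma intCast_mul_one_add_natCast_sq_pow {n : ℤ} {l m : ℕ} (h : ((n * m : ℤ) : ZMod q) = l) :
    (n : ZMod (q ^ 3)) * (1 + (q : ZMod (q ^ 3)) ^ 2) ^ m = n + q ^ 2 * l := by
  rw [← Int.cast_natCast l, intCast_eq_intCast_iff_dvd_sub] at h
  obtain ⟨c, hc⟩ := h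
  have hc' := congrArg (Int.cast : ℤ → ZMod (q ^ 3)) hc
  push_cast at hc'
  rw [one_add_natCast_sq_pow]
  linear_combination (-(q : ZMod (q ^ 3)) ^ 2) * hc' - (c : ZMod (q ^ 3)) * natCast_self_pow_three

end ZMod

namespace DirichletCharacter

lemma apply_one_add_natCast_sq_ne_one {R : Type*} [CommMonoidWithZero R] {q : ℕ} (hq : 1 < q)
    {χ : DirichletCharacter R (q ^ 3)} (hχ : χ.IsPrimitive) :
    χ (1 + (q : ZMod (q ^ 3)) ^ 2) ≠ 1 := by
  have : NeZero q := ⟨by omega⟩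
  intro h
  have hdvd : q ^ 2 ∣ q ^ 3 := pow_dvd_pow q (by norm_num)
  have hfactors : χ.FactorsThrough (q ^ 2) := by
    refine (factorsThrough_iff_ker_unitsMap hdvd).mpr fun v hv ↦ ?_
    rw [MonoidHom.mem_ker, Units.ext_iff, ZMod.unitsMap_val] at hv
    obtain ⟨t, ht⟩ := ZMod.exists_eq_one_add_natCast_sq_pow_of_castHom_eq_one hv
    rw [MonoidHom.mem_ker, Units.ext_iff, MulChar.coe_toUnitHom, ht, map_pow, h, one_pow,
      Units.val_one]
  have hle : q ^ 3 ≤ q ^ 2 := hχ ▸ Nat.sInf_le hfactors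
  exact absurd hle (not_le.mpr (Nat.pow_lt_pow_right hq (by norm_num)))

lemma mul_conj_apply_intCast_eq_one {N : ℕ} (χ : DirichletCharacter ℂ N) {n : ℤ}
    (hn : IsCoprime n N) : χ n * starRingEnd ℂ (χ n) = 1 := by
  rw [Complex.mul_conj, Complex.normSq_eq_norm_sq, ← ZMod.coe_unitOfIsCoprime n hn,
    unit_norm_eq_one]
  norm_num

end DirichletCharacter

theorem postnikov_formula_general (p : ℕ) (hp : p.Prime)
    (α : DirichletCharacter ℂ (p ^ 3)) (hα : α.IsPrimitive) :
    ∃ a : ZMod p, a ≠ 0 ∧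
      ∀ (l : ℕ), 0 < l → ∀ n : ℤ, IsCoprime n (p : ℤ) →
        α ((n : ZMod (p ^ 3)) + (p : ZMod (p ^ 3)) ^ 2 * (l : ZMod (p ^ 3))) *
            (starRingEnd ℂ) (α (n : ZMod (p ^ 3))) =
          Complex.exp (2 * Real.pi * Complex.I *
            ((a * (l : ZMod p) * ((n : ZMod p)⁻¹)).val : ℕ) / p) := by
  have : Fact p.Prime := ⟨hp⟩
  obtain ⟨a, ha⟩ : ∃ a : ZMod p, (toCircle a : ℂ) = α (1 + (p : ZMod (p ^ 3)) ^ 2) :=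
    exists_toCircle_eq_of_pow_eq_one (by rw [← map_pow, one_add_natCast_sq_pow_self, map_one])
  refine ⟨a, fun h0 ↦ α.apply_one_add_natCast_sq_ne_one hp.one_lt hα ?_, fun l _ n hn ↦ ?_⟩
  · rw [← ha, h0, AddChar.map_zero_eq_one, Circle.coe_one]
  set m := ((l : ZMod p) * (n : ZMod p)⁻¹).val
  have hm : (m : ZMod p) = l * (n : ZMod p)⁻¹ := natCast_zmod_val _
  have hnm : ((n * m : ℤ) : ZMod p) = l := by
    push_cast
    rw [hm, mul_left_comm, coe_int_mul_inv_eq_one hn, mul_one]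
  rw [← intCast_mul_one_add_natCast_sq_pow hnm, map_mul, map_pow, mul_right_comm,
    α.mul_conj_apply_intCast_eq_one (by exact_mod_cast hn.pow_right (n := 3)), one_mul, ← ha,
    ← Circle.coe_pow, ← AddChar.map_nsmul_eq_pow, nsmul_eq_mul, hm, mul_comm, ← mul_assoc,
    toCircle_apply]

/-- Postnikov formula, special case: for `p` an odd prime and `α` primitive
mod `p³`, there is a nonzero `a_α` mod `p` with
`α(n+p²l)·conj(α(n)) = e^{2πi a_α l n̄ / p}` for all `l > 0` and `n` coprime to `p`. -/
theorem postnikov_formula (p : ℕ) (hp : p.Prime) (hodd : Odd p)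
    (α : DirichletCharacter ℂ (p ^ 3)) (hα : α.IsPrimitive) :
    ∃ a : ZMod p, a ≠ 0 ∧
      ∀ (l : ℕ), 0 < l → ∀ n : ℤ, IsCoprime n (p : ℤ) →
        α ((n : ZMod (p ^ 3)) + (p : ZMod (p ^ 3)) ^ 2 * (l : ZMod (p ^ 3))) *
            (starRingEnd ℂ) (α (n : ZMod (p ^ 3))) =
          Complex.exp (2 * Real.pi * Complex.I *
            ((a * (l : ZMod p) * ((n : ZMod p)⁻¹)).val : ℕ) / p) :=
  postnikov_formula_general p hp α hα
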